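/- Let φ̃ be the Dirichlet kernel with cutoff frequency f_c ∈ ā„•*, i.e. φ̃(x) = āˆ‘_{|n| ≤ f_c} e^{2iĻ€nx} on 𝕋. Then the derivatives (φ̃, φ̃', …, φ̃^{(k)}) are linearly independent in L²(𝕋) if and only if k ≤ 2f_c. -/

import Mathlib

/-!
Complexifying, `φ(x) = ∑_{|n| ≤ f_c} exp (2πinx)` (the sines cancel by symmetry), so
`φ^{(j)} = ∑_n (2πin)^j exp (2πinx)`. The exponentials with distinct frequencies are linearly
independent characters, hence the derivatives `φ, …, φ^{(k)}` are independent exactly when the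
Vandermonde vectors `((2πin)^j)_{|n| ≤ f_c}`, `j ≤ k`, are, i.e. when `k + 1 ≤ 2 f_c + 1`.
-/

open Complex Finset

theorem linearIndependent_ofReal_comp_iff {ι X : Type*} {f : ι → X → ℝ} :
    LinearIndependent ℂ (fun i x => (f i x : ℂ)) ↔ LinearIndependent ℝ f := by
  refine ⟨fun h => (h.restrict_scalars' ℝ).of_comp (ofRealCLM.toLinearMap.compLeft X),
    fun h => ?_⟩
  rw [linearIndependent_iff'] at h ⊢
  intro s g hg i hi
  have hpart (part : ℂ →ₗ[ℝ] ℝ) (hpart : ∀ z (r : ℝ), part (z * r) = part z * r) :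
      ∑ j ∈ s, part (g j) • f j = 0 := by
    ext x
    simpa [hpart] using congr(part ($hg x))
  exact Complex.ext (h s _ (hpart reLm (by simp)) i hi) (h s _ (hpart imLm (by simp)) i hi)

theorem linearIndependent_powers_iff_le_card {R ι : Type*} [CommRing R] [IsDomain R]
    [Fintype ι] {μ : ι → R} (hμ : Function.Injective μ) (m : ℕ) :
    LinearIndependent R (fun (j : Fin m) (i : ι) => μ i ^ (j : ℕ)) ↔ m ≤ Fintype.card ι := by
  refine ⟨fun h => by simpa using h.fintype_card_le_finrank, fun hm => ?_⟩
  obtain ⟨e⟩ := Function.Embedding.nonempty_of_card_le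
    (by simpa using hm : Fintype.card (Fin m) ≤ Fintype.card ι)
  rw [Fintype.linearIndependent_iff]
  intro g hg
  -- restricting to `m` of the points leaves a square Vandermonde system
  have := Matrix.eq_zero_of_forall_index_sum_mul_pow_eq_zero (hμ.comp e.injective) (v := g)
    fun j => by simpa using congr_fun hg (e j)
  simp [this]

theorem deriv_ofReal_comp (f : ℝ → ℝ) (x : ℝ) :
    deriv (fun y => (f y : ℂ)) x = deriv f x := by
  by_cases hf : DifferentiableAt ℝ f x
  · exact hf.hasDerivAt.ofReal_comp.deriv
  · have hf' : ¬ DifferentiableAt ℝ (fun y => (f y : ℂ)) x := fun h =>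
      hf (by simpa [Function.comp_def] using reCLM.differentiableAt.comp x h)
    simp [deriv_zero_of_not_differentiableAt hf, deriv_zero_of_not_differentiableAt hf']

theorem iteratedDeriv_ofReal_comp (f : ℝ → ℝ) (n : ℕ) :
    iteratedDeriv n (fun y => (f y : ℂ)) = fun y => ((iteratedDeriv n f y : ℝ) : ℂ) := by
  induction n with
  | zero => simp
  | succ n ih => ext x; simp only [iteratedDeriv_succ, ih, deriv_ofReal_comp]

theorem hasDerivAt_cexp_mul_ofReal (μ : ℂ) (x : ℝ) :
    HasDerivAt (fun x : ℝ => cexp (μ * x)) (μ * cexp (μ * x)) x := by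
  simpa [mul_comm] using ((hasDerivAt_id (x : ℂ)).const_mul μ).cexp.comp_ofReal

theorem iteratedDeriv_sum_mul_cexp {ι : Type*} (s : Finset ι) (b μ : ι → ℂ) (n : ℕ) :
    iteratedDeriv n (fun x : ℝ => ∑ i ∈ s, b i * cexp (μ i * x)) =
      fun x : ℝ => ∑ i ∈ s, b i * μ i ^ n * cexp (μ i * x) := by
  induction n generalizing b with
  | zero => simp
  | succ n ih =>
    have hderiv : deriv (fun x : ℝ => ∑ i ∈ s, b i * cexp (μ i * x)) =
        fun x : ℝ => ∑ i ∈ s, (b i * μ i) * cexp (μ i * x) := by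
      ext x
      refine (HasDerivAt.fun_sum fun i _ => ?_).deriv
      simpa only [mul_assoc] using (hasDerivAt_cexp_mul_ofReal (μ i) x).const_mul (b i)
    rw [iteratedDeriv_succ', hderiv, ih]
    ext x
    exact sum_congr rfl fun i _ => by ring

theorem linearIndependent_cexp_mul_ofReal {ι : Type*} {μ : ι → ℂ}
    (hμ : Function.Injective μ) :
    LinearIndependent ℂ (fun i (x : ℝ) => cexp (μ i * x)) := by
  let χ (i : ι) : Multiplicative ℝ →* ℂ :=
    { toFun x := cexp (μ i * x.toAdd)
      map_one' := by simp
      map_mul' x y := by simp [mul_add, Complex.exp_add] }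
  -- the character `χ i` recovers `μ i` as its derivative at `0`
  have hχ : Function.Injective χ := fun i j hij => hμ <| by
    have hfun : (fun x : ℝ => cexp (μ i * x)) = fun x : ℝ => cexp (μ j * x) :=
      funext fun x => DFunLike.congr_fun hij (Multiplicative.ofAdd x)
    have hderiv := hasDerivAt_cexp_mul_ofReal (μ i) 0
    rw [hfun] at hderiv
    simpa using hderiv.unique (hasDerivAt_cexp_mul_ofReal (μ j) 0)
  exact (linearIndependent_monoidHom (Multiplicative ℝ) ℂ).comp χ hχ

theorem linearIndependent_iteratedDeriv_sum_mul_cexp_iff {ι : Type*} [Fintype ι] {μ : ι → ℂ}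
    (hμ : Function.Injective μ) {b : ι → ℂ} (hb : ∀ i, b i ≠ 0) (m : ℕ) :
    LinearIndependent ℂ
        (fun j : Fin m => iteratedDeriv j (fun x : ℝ => ∑ i, b i * cexp (μ i * x))) ↔
      m ≤ Fintype.card ι := by
  have hexp : LinearIndependent ℂ (fun i (x : ℝ) => b i * cexp (μ i * x)) :=
    (linearIndependent_cexp_mul_ofReal hμ).units_smul fun i => Units.mk0 (b i) (hb i)
  set T := Fintype.linearCombination ℂ (fun i (x : ℝ) => b i * cexp (μ i * x))
  have hT : (fun j : Fin m => iteratedDeriv j (fun x : ℝ => ∑ i, b i * cexp (μ i * x))) =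
      T ∘ fun (j : Fin m) (i : ι) => μ i ^ (j : ℕ) := by
    ext j x
    simp [T, iteratedDeriv_sum_mul_cexp, Fintype.linearCombination_apply, mul_assoc,
      mul_left_comm]
  rw [hT, T.linearIndependent_iff_of_injOn
    (linearIndependent_iff_injective_fintypeLinearCombination.mp hexp).injOn]
  exact linearIndependent_powers_iff_le_card hμ m

theorem sum_Icc_cexp_mul_I_eq_sum_cos (N : ℤ) (θ : ℝ) :
    ∑ n ∈ Icc (-N) N, cexp (n * θ * I) = ((∑ n ∈ Icc (-N) N, Real.cos (n * θ) : ℝ) : ℂ) := by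
  have hsymm : (Icc (-N) N).map (Equiv.neg ℤ).toEmbedding = Icc (-N) N := by
    ext n; simp; omega
  have hsin : ∑ n ∈ Icc (-N) N, Real.sin (n * θ) = 0 :=
    Function.Odd.finsetSum_eq_zero (fun n => by simp [neg_mul, Real.sin_neg]) hsymm
  have hexp (n : ℤ) : cexp (n * θ * I) = Real.cos (n * θ) + Real.sin (n * θ) * I := by
    rw [← ofReal_intCast, ← ofReal_mul, exp_mul_I, ofReal_cos, ofReal_sin]
  simp only [hexp, sum_add_distrib, ← sum_mul, ← ofReal_sum, hsin]
  simp

theorem dirichlet_derivatives_linearIndependent_iff_general (fc : ℕ)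
    (k : ℕ) (phi : ℝ → ℝ)
    (hphi : ∀ x : ℝ, phi x =
      ∑ n ∈ Finset.Icc (-(fc : ℤ)) (fc : ℤ), Real.cos (2 * Real.pi * (n : ℝ) * x)) :
    LinearIndependent ℝ (fun j : Fin (k+1) => iteratedDeriv (j : ℕ) phi) ↔ k ≤ 2 * fc := by
  set s := Icc (-(fc : ℤ)) fc
  let μ (n : s) : ℂ := n * (2 * Real.pi) * I
  have hμ : Function.Injective μ := fun m n hmn => by
    simpa [μ, Real.pi_ne_zero, I_ne_zero] using hmn
  have hphiC : (fun x => (phi x : ℂ)) = fun x : ℝ => ∑ n : s, 1 * cexp (μ n * x) := by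
    ext x
    have hterm (n : s) : 1 * cexp (μ n * x) = cexp ((n : ℤ) * (2 * Real.pi * x : ℝ) * I) := by
      simp only [μ]; push_cast; ring_nf
    rw [Fintype.sum_congr _ _ hterm,
      sum_coe_sort s (fun n : ℤ => cexp (n * (2 * Real.pi * x : ℝ) * I)),
      sum_Icc_cexp_mul_I_eq_sum_cos, hphi]
    congr! 3 with n
    ring
  have hderivs : (fun (j : Fin (k + 1)) (x : ℝ) => ((iteratedDeriv j phi x : ℝ) : ℂ)) =
      fun j : Fin (k + 1) => iteratedDeriv j (fun x : ℝ => ∑ n : s, 1 * cexp (μ n * x)) := by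
    ext j : 1
    rw [← hphiC, iteratedDeriv_ofReal_comp]
  rw [← linearIndependent_ofReal_comp_iff, hderivs,
    linearIndependent_iteratedDeriv_sum_mul_cexp_iff hμ (fun _ => one_ne_zero), Fintype.card_coe,
    Int.card_Icc]
  omega

/-- For the Dirichlet kernel with cutoff frequency f_c, the derivatives
(phi, phi', ..., phi^(k)) are linearly independent iff k <= 2 f_c. -/
theorem dirichlet_derivatives_linearIndependent_iff (fc : ℕ) (hfc : 1 ≤ fc)
    (k : ℕ) (phi : ℝ → ℝ)
    (hphi : ∀ x : ℝ, phi x =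
      ∑ n ∈ Finset.Icc (-(fc : ℤ)) (fc : ℤ), Real.cos (2 * Real.pi * (n : ℝ) * x)) :
    LinearIndependent ℝ (fun j : Fin (k+1) => iteratedDeriv (j : ℕ) phi) ↔ k ≤ 2 * fc :=
  dirichlet_derivatives_linearIndependent_iff_general fc k phi hphi
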